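/- arXiv:2101.06247 — 10 statements merged into one kernel-verified Lean document; each statement's English description precedes it below -/
import Mathlib

section
/- Every finite graph with no isolated vertices has a vertex partition into two dominating sets; in particular, the vertex set of any finite simple graph with minimum degree at least 1 can be partitioned into sets D and its complement, both of which are dominating sets. -/
/-- `D` is a dominating set of `G`: every vertex outside `D` has a neighbor in `D`. -/
def Dominates {V : Type*} (G : SimpleGraph V) (D : Set V) : Prop :=
  ∀ v, v ∉ D → ∃ u ∈ D, G.Adj v u

/-- `T` is a total dominating set of `G`: every vertex has a neighbor in `T`. -/
def TotallyDominates {V : Type*} (G : SimpleGraph V) (T : Set V) : Prop :=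
  ∀ v, ∃ u ∈ T, G.Adj v u

/-- `(D, T)` is a DT-pair in `G`. -/
def DTPair {V : Type*} (G : SimpleGraph V) (D T : Set V) : Prop :=
  Disjoint D T ∧ Dominates G D ∧ TotallyDominates G T

/-- `G` has a DT-pair. -/
def HasDTPair {V : Type*} (G : SimpleGraph V) : Prop :=
  ∃ D T : Set V, DTPair G D T


/-! A maximal independent set `D` dominates, since any vertex without a neighbour in `D` could
be added to it. Its complement dominates as well: a vertex of `D` has some neighbour, and by
independence that neighbour lies outside `D`. -/

namespace SimpleGraph

variable {V : Type*} (G : SimpleGraph V)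

theorem exists_maximal_isIndepSet : ∃ s, Maximal G.IsIndepSet s :=
  zorn_subset {s | G.IsIndepSet s} fun _ hcS hc =>
    ⟨_, hc.pairwise_sUnion.2 hcS, fun _ => Set.subset_sUnion_of_mem⟩

variable {G}

theorem dominates_of_maximal_isIndepSet {s : Set V} (hs : Maximal G.IsIndepSet s) :
    Dominates G s := by
  intro v hv
  by_contra! hnadj
  have hins : G.IsIndepSet (insert v s) :=
    hs.prop.insert fun u hu _ => ⟨hnadj u hu, fun huv => hnadj u hu huv.symm⟩
  exact hv (hs.le_of_ge hins (Set.subset_insert v s) (Set.mem_insert v s))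

theorem IsIndepSet.dominates_compl {s : Set V} (hs : G.IsIndepSet s)
    (h : ∀ v : V, ∃ u, G.Adj v u) : Dominates G sᶜ := by
  intro v hv
  rw [Set.notMem_compl_iff] at hv
  obtain ⟨u, huv⟩ := h v
  exact ⟨u, fun hu => hs hv hu huv.ne huv, huv⟩

end SimpleGraph

theorem ore_partition_into_two_dominating_sets_general {V : Type*}
    (G : SimpleGraph V) (h : ∀ v : V, ∃ u, G.Adj v u) :
    ∃ D : Set V, Dominates G D ∧ Dominates G Dᶜ := by
  obtain ⟨D, hD⟩ := G.exists_maximal_isIndepSet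
  exact ⟨D, SimpleGraph.dominates_of_maximal_isIndepSet hD, hD.prop.dominates_compl h⟩

/-- Ore: the vertex set of any finite simple graph with no isolated vertices can be
partitioned into a set `D` and its complement, both of which are dominating sets. -/
theorem ore_partition_into_two_dominating_sets {V : Type*} [Fintype V]
    (G : SimpleGraph V) (h : ∀ v : V, ∃ u, G.Adj v u) :
    ∃ D : Set V, Dominates G D ∧ Dominates G Dᶜ :=
  ore_partition_into_two_dominating_sets_general G h
end

section
/- The path P_n on n vertices has a DT-pair if and only if n ∉ {1, 2, 3, 5, 6, 9}. -/
/-- Coloring formulation: 0 = in D, 1 = in T, 2 = neither. -/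
def GoodCol (n : ℕ) (f : ℕ → Fin 3) : Prop :=
  (∀ v < n, f v ≠ 0 → ∃ u < n, f u = 0 ∧ (v + 1 = u ∨ u + 1 = v)) ∧
  (∀ v < n, ∃ u < n, f u = 1 ∧ (v + 1 = u ∨ u + 1 = v))

lemma goodCol_iff_hasDTPair (n : ℕ) :
    (∃ f, GoodCol n f) ↔ HasDTPair (SimpleGraph.pathGraph n) := by
  constructor
  · rintro ⟨f, hdom, htot⟩
    refine ⟨{v | f v.val = 0}, {v | f v.val = 1}, ?_, ?_, ?_⟩
    · rw [Set.disjoint_left]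
      intro v h0 h1
      simp only [Set.mem_setOf_eq] at h0 h1
      rw [h0] at h1; exact absurd h1 (by decide)
    · intro v hv
      obtain ⟨u, hu, hu0, hadj⟩ := hdom v.val v.isLt hv
      exact ⟨⟨u, hu⟩, hu0, SimpleGraph.pathGraph_adj.mpr hadj⟩
    · intro v
      obtain ⟨u, hu, hu1, hadj⟩ := htot v.val v.isLt
      exact ⟨⟨u, hu⟩, hu1, SimpleGraph.pathGraph_adj.mpr hadj⟩
  · rintro ⟨D, T, hdisj, hdom, htot⟩
    classical
    refine ⟨fun v => if h : v < n then
      (if (⟨v, h⟩ : Fin n) ∈ D then 0 else if (⟨v, h⟩ : Fin n) ∈ T then 1 else 2)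
      else 2, ?_, ?_⟩
    · intro v hv hne
      simp only [dif_pos hv] at hne
      have hvD : (⟨v, hv⟩ : Fin n) ∉ D := by
        intro h; rw [if_pos h] at hne; exact hne rfl
      obtain ⟨u, huD, hadj⟩ := hdom _ hvD
      refine ⟨u.val, u.isLt, ?_, ?_⟩
      · simp only [dif_pos u.isLt, Fin.eta, if_pos huD]
      · exact SimpleGraph.pathGraph_adj.mp hadj
    · intro v hv
      obtain ⟨u, huT, hadj⟩ := htot ⟨v, hv⟩
      refine ⟨u.val, u.isLt, ?_, ?_⟩
      · have huD : u ∉ D := fun h => Set.disjoint_left.mp hdisj h huT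
        simp only [dif_pos u.isLt, Fin.eta, if_neg huD, if_pos huT]
      · exact SimpleGraph.pathGraph_adj.mp hadj

/-- Colorings reverse. -/
lemma goodCol_rev {n : ℕ} {f : ℕ → Fin 3} (h : GoodCol n f) :
    GoodCol n (fun i => f (n - 1 - i)) := by
  obtain ⟨hdom, htot⟩ := h
  constructor
  · intro v hv hne
    obtain ⟨u, hu, hu0, hadj⟩ := hdom (n - 1 - v) (by omega) hne
    exact ⟨n - 1 - u, by omega, by simp only []; rw [show n-1-(n-1-u) = u by omega]; exact hu0,
      by omega⟩
  · intro v hv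
    obtain ⟨u, hu, hu1, hadj⟩ := htot (n - 1 - v) (by omega)
    exact ⟨n - 1 - u, by omega, by simp only []; rw [show n-1-(n-1-u) = u by omega]; exact hu1,
      by omega⟩

/-- Colorings concatenate. -/
lemma goodCol_add {a b : ℕ} {f g : ℕ → Fin 3} (hf : GoodCol a f) (hg : GoodCol b g) :
    GoodCol (a + b) (fun i => if i < a then f i else g (i - a)) := by
  obtain ⟨hfd, hft⟩ := hf
  obtain ⟨hgd, hgt⟩ := hg
  constructor
  · intro v hv hne
    by_cases h : v < a
    · have hne' : f v ≠ 0 := by simpa [h] using hne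
      obtain ⟨u, hu, hu0, hadj⟩ := hfd v h hne'
      exact ⟨u, by omega, by simpa [hu] using hu0, hadj⟩
    · have hne' : g (v - a) ≠ 0 := by simpa [h] using hne
      obtain ⟨u, hu, hu0, hadj⟩ := hgd (v - a) (by omega) hne'
      refine ⟨u + a, by omega, ?_, by rcases hadj with h' | h' <;> omega⟩
      simp only [if_neg (show ¬ u + a < a by omega), Nat.add_sub_cancel]
      exact hu0
  · intro v hv
    by_cases h : v < a
    · obtain ⟨u, hu, hu1, hadj⟩ := hft v h
      exact ⟨u, by omega, by simpa [hu] using hu1, hadj⟩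
    · obtain ⟨u, hu, hu1, hadj⟩ := hgt (v - a) (by omega)
      refine ⟨u + a, by omega, ?_, by rcases hadj with h' | h' <;> omega⟩
      simp only [if_neg (show ¬ u + a < a by omega), Nat.add_sub_cancel]
      exact hu1

/-- The `(D T T)^(k+1) D` pattern works for `n ≡ 1 (mod 3)`, `n ≥ 4`. -/
lemma goodCol_three (k : ℕ) : GoodCol (3 * k + 4) (fun i => if i % 3 = 0 then 0 else 1) := by
  constructor
  · intro v hv hne
    have hv3 : v % 3 ≠ 0 := by
      intro h; simp only [if_pos h] at hne; exact hne rfl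
    rcases (show v % 3 = 0 ∨ v % 3 = 1 ∨ v % 3 = 2 by omega) with h | h | h
    · exact absurd h hv3
    · exact ⟨v - 1, by omega, by simp only [if_pos (show (v-1) % 3 = 0 by omega)], by omega⟩
    · exact ⟨v + 1, by omega, by simp only [if_pos (show (v+1) % 3 = 0 by omega)], by omega⟩
  · intro v hv
    rcases (show v % 3 = 0 ∨ v % 3 = 1 ∨ v % 3 = 2 by omega) with h | h | h
    · by_cases h0 : v + 1 < 3 * k + 4
      · exact ⟨v + 1, h0, by simp only [if_neg (show ¬ (v+1) % 3 = 0 by omega)], by omega⟩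
      · exact ⟨v - 1, by omega, by simp only [if_neg (show ¬ (v-1) % 3 = 0 by omega)], by omega⟩
    · exact ⟨v + 1, by omega, by simp only [if_neg (show ¬ (v+1) % 3 = 0 by omega)], by omega⟩
    · exact ⟨v - 1, by omega, by simp only [if_neg (show ¬ (v-1) % 3 = 0 by omega)], by omega⟩

/-- Forced prefix of any good coloring. -/
lemma goodCol_force {n : ℕ} {f : ℕ → Fin 3} (h : GoodCol n f) (hn : 2 ≤ n) :
    f 0 = 0 ∧ f 1 = 1 ∧ (4 ≤ n → f 2 = 1 ∧ f 3 = 0) := by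
  obtain ⟨hdom, htot⟩ := h
  have h1 : f 1 = 1 := by
    obtain ⟨u, hu, hu1, hadj⟩ := htot 0 (by omega)
    rw [show u = 1 by omega] at hu1; exact hu1
  have h0 : f 0 = 0 := by
    by_contra h0
    obtain ⟨u, hu, hu0, hadj⟩ := hdom 0 (by omega) h0
    rw [show u = 1 by omega] at hu0
    rw [h1] at hu0; exact absurd hu0 (by decide)
  refine ⟨h0, h1, fun hn4 => ?_⟩
  have h2 : f 2 = 1 := by
    obtain ⟨u, hu, hu1, hadj⟩ := htot 1 (by omega)
    rcases hadj with h | h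
    · rw [show u = 2 by omega] at hu1; exact hu1
    · rw [show u = 0 by omega] at hu1
      rw [h0] at hu1; exact absurd hu1 (by decide)
  have h3 : f 3 = 0 := by
    obtain ⟨u, hu, hu0, hadj⟩ := hdom 2 (by omega) (by rw [h2]; decide)
    rcases hadj with h | h
    · rw [show u = 3 by omega] at hu0; exact hu0
    · rw [show u = 1 by omega] at hu0
      rw [h1] at hu0; exact absurd hu0 (by decide)
  exact ⟨h2, h3⟩

lemma no_goodCol : ∀ n ∈ ({1, 2, 3, 5, 6, 9} : Set ℕ), ¬ ∃ f, GoodCol n f := by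
  have key : ∀ n f, GoodCol n f → n ≠ 1 ∧ n ≠ 2 ∧ n ≠ 3 ∧ n ≠ 5 ∧ n ≠ 6 ∧ n ≠ 9 := by
    intro n f hf
    refine ⟨?_, ?_, ?_, ?_, ?_, ?_⟩ <;> rintro rfl
    · obtain ⟨u, hu, _, hadj⟩ := hf.2 0 (by omega)
      omega
    · obtain ⟨h0, h1, -⟩ := goodCol_force hf (by omega)
      obtain ⟨h0', h1', -⟩ := goodCol_force (goodCol_rev hf) (by omega)
      simp only [show (2:ℕ) - 1 - 0 = 1 by omega] at h0'
      rw [h1] at h0'; exact absurd h0' (by decide)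
    · obtain ⟨h0, h1, -⟩ := goodCol_force hf (by omega)
      -- vertex 2 must be 0 (domination), but vertex 1 needs T-neighbor 2
      have h2 : f 2 = 0 := by
        by_contra h2
        obtain ⟨u, hu, hu0, hadj⟩ := hf.1 2 (by omega) h2
        rw [show u = 1 by omega] at hu0
        rw [h1] at hu0; exact absurd hu0 (by decide)
      obtain ⟨u, hu, hu1, hadj⟩ := hf.2 1 (by omega)
      rcases hadj with h | h
      · rw [show u = 2 by omega] at hu1
        rw [h2] at hu1; exact absurd hu1 (by decide)
      · rw [show u = 0 by omega] at hu1
        rw [h0] at hu1; exact absurd hu1 (by decide)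
    · obtain ⟨h0, h1, h23⟩ := goodCol_force hf (by omega)
      obtain ⟨h2, h3⟩ := h23 (by omega)
      obtain ⟨u, hu, hu1, hadj⟩ := hf.2 4 (by omega)
      rw [show u = 3 by omega] at hu1
      rw [h3] at hu1; exact absurd hu1 (by decide)
    · obtain ⟨h0, h1, h23⟩ := goodCol_force hf (by omega)
      obtain ⟨h2, h3⟩ := h23 (by omega)
      obtain ⟨-, -, h23'⟩ := goodCol_force (goodCol_rev hf) (by omega)
      obtain ⟨-, h3'⟩ := h23' (by omega)
      simp only [show (6:ℕ) - 1 - 3 = 2 by omega] at h3'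
      rw [h2] at h3'; exact absurd h3' (by decide)
    · obtain ⟨h0, h1, h23⟩ := goodCol_force hf (by omega)
      obtain ⟨h2, h3⟩ := h23 (by omega)
      obtain ⟨-, -, h23'⟩ := goodCol_force (goodCol_rev hf) (by omega)
      obtain ⟨-, h3'⟩ := h23' (by omega)
      simp only [show (9:ℕ) - 1 - 3 = 5 by omega] at h3'
      obtain ⟨u, hu, hu1, hadj⟩ := hf.2 4 (by omega)
      rcases hadj with h | h
      · rw [show u = 5 by omega] at hu1
        rw [h3'] at hu1; exact absurd hu1 (by decide)
      · rw [show u = 3 by omega] at hu1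
        rw [h3] at hu1; exact absurd hu1 (by decide)
  rintro n hn ⟨f, hf⟩
  obtain ⟨a, b, c, d, e, g⟩ := key n f hf
  simp only [Set.mem_insert_iff, Set.mem_singleton_iff] at hn
  tauto

lemma exists_goodCol {n : ℕ} (hn : n ∉ ({1, 2, 3, 5, 6, 9} : Set ℕ)) : ∃ f, GoodCol n f := by
  simp only [Set.mem_insert_iff, Set.mem_singleton_iff, not_or] at hn
  obtain ⟨h1, h2, h3, h5, h6, h9⟩ := hn
  rcases Nat.lt_or_ge n 12 with h | h
  · -- n ∈ {0, 4, 7, 8, 10, 11}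
    interval_cases n <;> first
      | exact ⟨fun _ => 2, fun v hv => absurd hv (by omega), fun v hv => absurd hv (by omega)⟩
      | (exact ⟨_, goodCol_three 0⟩)
      | (exact ⟨_, goodCol_three 1⟩)
      | (exact ⟨_, goodCol_three 2⟩)
      | (exact ⟨_, show GoodCol (4 + 4) _ from goodCol_add (goodCol_three 0) (goodCol_three 0)⟩)
      | (exact ⟨_, show GoodCol (4 + 7) _ from goodCol_add (goodCol_three 0) (goodCol_three 1)⟩)
  · -- n ≥ 12: write n as 4 + 4 + (3k+4) or 4 + (3k+4) or (3k+4)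
    rcases (show n % 3 = 0 ∨ n % 3 = 1 ∨ n % 3 = 2 by omega) with hm | hm | hm
    · obtain ⟨k, hk⟩ : ∃ k, n = 4 + 4 + (3 * k + 4) := ⟨(n - 12) / 3, by omega⟩
      exact hk ▸ ⟨_, goodCol_add (goodCol_add (goodCol_three 0) (goodCol_three 0))
        (goodCol_three _)⟩
    · obtain ⟨k, hk⟩ : ∃ k, n = 3 * k + 4 := ⟨(n - 4) / 3, by omega⟩
      exact hk ▸ ⟨_, goodCol_three _⟩
    · obtain ⟨k, hk⟩ : ∃ k, n = 4 + (3 * k + 4) := ⟨(n - 8) / 3, by omega⟩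
      exact hk ▸ ⟨_, goodCol_add (goodCol_three 0) (goodCol_three _)⟩

/-- The path `P_n` has a DT-pair if and only if `n ∉ {1, 2, 3, 5, 6, 9}`. -/
theorem pathGraph_hasDTPair_iff (n : ℕ) :
    HasDTPair (SimpleGraph.pathGraph n) ↔ n ∉ ({1, 2, 3, 5, 6, 9} : Set ℕ) := by
  constructor
  · intro h hn
    exact no_goodCol n hn ((goodCol_iff_hasDTPair n).mpr h)
  · intro h
    exact (goodCol_iff_hasDTPair n).mp (exists_goodCol h)
end

section
/- The cycle C_n (n ≥ 3) has a DT-pair if and only if n ≠ 5. -/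
/-- The cycle `C_n` on vertex set `ZMod n`, with `i` adjacent to `i ± 1`. -/
def cycleGraph (n : ℕ) : SimpleGraph (ZMod n) :=
  SimpleGraph.fromRel (fun i j => j = i + 1)

/-- The pattern: positions `< 4a` follow `TTDD`, the rest follow `TTD`.
`dtP a k` holds iff position `k` is labelled `T`. -/
def dtP (a k : ℕ) : Prop := if k < 4*a then k % 4 < 2 else (k - 4*a) % 3 < 2

lemma dtP_key (a b n k : ℕ) (hn : n = 4*a + 3*b) (h3 : 3 ≤ n) (hk : k < n) :
    (dtP a ((k+1) % n) ∨ dtP a ((k+(n-1)) % n)) ∧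
    (dtP a k → ¬ dtP a ((k+1) % n) ∨ ¬ dtP a ((k+(n-1)) % n)) := by
  have hs : ((k+1) % n = k+1 ∧ k+1 < n) ∨ ((k+1) % n = 0 ∧ k+1 = n) := by
    rcases Nat.lt_or_ge (k+1) n with h | h
    · exact Or.inl ⟨Nat.mod_eq_of_lt h, h⟩
    · have he : k + 1 = n := by omega
      exact Or.inr ⟨by rw [he, Nat.mod_self], he⟩
  have ht : ((k+(n-1)) % n = k-1 ∧ 1 ≤ k) ∨ ((k+(n-1)) % n = n-1 ∧ k = 0) := by
    rcases Nat.eq_zero_or_pos k with h | h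
    · subst h
      exact Or.inr ⟨by rw [Nat.zero_add, Nat.mod_eq_of_lt (by omega)], rfl⟩
    · have he : k + (n-1) = n + (k-1) := by omega
      exact Or.inl ⟨by rw [he, Nat.add_mod_left, Nat.mod_eq_of_lt (by omega)], h⟩
  subst hn
  obtain ⟨q, r, hr, rfl⟩ : ∃ q r, r < 4 ∧ k = 4*q + r :=
    ⟨k/4, k%4, Nat.mod_lt _ (by norm_num), (Nat.div_add_mod k 4).symm⟩
  obtain (⟨hs, hs'⟩ | ⟨hs, hs'⟩) := hs <;> obtain (⟨ht, ht'⟩ | ⟨ht, ht'⟩) := ht <;>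
    rw [hs, ht] <;> clear hs ht <;> unfold dtP <;> split_ifs <;> try omega
  · -- k = 0, b = 0 case
    have hb : b = 0 := by omega
    subst hb
    exact ⟨Or.inl (by omega), fun _ => Or.inr (by omega)⟩
  · -- k = n - 1, b = 0 case
    have hb : b = 0 := by omega
    subst hb
    have hr3 : r = 3 := by omega
    subst hr3
    exact ⟨Or.inl (by omega), fun hc => absurd hc (by omega)⟩

lemma cycle_adj_succ (n : ℕ) (hn : 3 ≤ n) (v : ZMod n) :
    (cycleGraph n).Adj v (v + 1) := by
  haveI : NeZero n := ⟨by omega⟩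
  haveI : Fact (1 < n) := ⟨by omega⟩
  rw [cycleGraph, SimpleGraph.fromRel_adj]
  refine ⟨fun h => ?_, Or.inl rfl⟩
  exact one_ne_zero (left_eq_add.mp h)

lemma cycle_adj_pred (n : ℕ) (hn : 3 ≤ n) (v : ZMod n) :
    (cycleGraph n).Adj v (v - 1) := by
  have h := cycle_adj_succ n hn (v - 1)
  rw [sub_add_cancel] at h
  exact h.symm

lemma val_add_one (n : ℕ) (hn : 3 ≤ n) (v : ZMod n) :
    (v + 1).val = (v.val + 1) % n := by
  haveI : NeZero n := ⟨by omega⟩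
  haveI : Fact (1 < n) := ⟨by omega⟩
  rw [ZMod.val_add, ZMod.val_one]

lemma val_sub_one (n : ℕ) (hn : 3 ≤ n) (v : ZMod n) :
    (v - 1).val = (v.val + (n-1)) % n := by
  haveI : NeZero n := ⟨by omega⟩
  have h1 : ((n-1 : ℕ) : ZMod n) = -1 := by
    rw [Nat.cast_sub (by omega), Nat.cast_one, ZMod.natCast_self]; ring
  have h2 : v - 1 = v + ((n-1 : ℕ) : ZMod n) := by rw [h1]; ring
  rw [h2, ZMod.val_add, ZMod.val_natCast, Nat.mod_eq_of_lt (show n - 1 < n by omega)]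

lemma hasDTPair_of (n a b : ℕ) (hn : n = 4*a + 3*b) (h3 : 3 ≤ n) :
    HasDTPair (cycleGraph n) := by
  haveI : NeZero n := ⟨by omega⟩
  refine ⟨{v | ¬ dtP a v.val}, {v | dtP a v.val}, ?_, ?_, ?_⟩
  · rw [Set.disjoint_left]; intro v hv hv'; exact hv hv'
  · intro v hv
    rw [Set.mem_setOf_eq, not_not] at hv
    have key := (dtP_key a b n v.val hn h3 (ZMod.val_lt v)).2 hv
    rcases key with h | h
    · exact ⟨v + 1, by rw [Set.mem_setOf_eq, val_add_one n h3]; exact h, cycle_adj_succ n h3 v⟩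
    · exact ⟨v - 1, by rw [Set.mem_setOf_eq, val_sub_one n h3]; exact h, cycle_adj_pred n h3 v⟩
  · intro v
    have key := (dtP_key a b n v.val hn h3 (ZMod.val_lt v)).1
    rcases key with h | h
    · exact ⟨v + 1, by rw [Set.mem_setOf_eq, val_add_one n h3]; exact h, cycle_adj_succ n h3 v⟩
    · exact ⟨v - 1, by rw [Set.mem_setOf_eq, val_sub_one n h3]; exact h, cycle_adj_pred n h3 v⟩

lemma no_dtpair_five : ¬ HasDTPair (cycleGraph 5) := by
  have dec : ∀ D T : Finset (ZMod 5), ¬(Disjoint D T ∧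
      (∀ v, v ∉ D → ∃ u ∈ D, v ≠ u ∧ (u = v + 1 ∨ v = u + 1)) ∧
      (∀ v : ZMod 5, ∃ u ∈ T, v ≠ u ∧ (u = v + 1 ∨ v = u + 1))) := by decide
  rintro ⟨D, T, hdisj, hdom, htot⟩
  classical
  set D' := (Set.toFinite D).toFinset with hD'
  set T' := (Set.toFinite T).toFinset with hT'
  have hmD : ∀ v, v ∈ D' ↔ v ∈ D := fun v => Set.Finite.mem_toFinset _
  have hmT : ∀ v, v ∈ T' ↔ v ∈ T := fun v => Set.Finite.mem_toFinset _
  refine dec D' T' ⟨?_, ?_, ?_⟩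
  · rw [Finset.disjoint_left]
    intro v hv hv'
    exact hdisj.le_bot ⟨(hmD v).mp hv, (hmT v).mp hv'⟩
  · intro v hv
    obtain ⟨u, hu, hadj⟩ := hdom v (fun h => hv ((hmD v).mpr h))
    rw [cycleGraph, SimpleGraph.fromRel_adj] at hadj
    exact ⟨u, (hmD u).mpr hu, hadj⟩
  · intro v
    obtain ⟨u, hu, hadj⟩ := htot v
    rw [cycleGraph, SimpleGraph.fromRel_adj] at hadj
    exact ⟨u, (hmT u).mpr hu, hadj⟩

/-- For `n ≥ 3`, the cycle `C_n` has a DT-pair if and only if `n ≠ 5`. -/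
theorem cycleGraph_hasDTPair_iff (n : ℕ) (hn : 3 ≤ n) :
    HasDTPair (cycleGraph n) ↔ n ≠ 5 := by
  constructor
  · rintro h rfl
    exact no_dtpair_five h
  · intro h5
    exact hasDTPair_of n (n % 3) ((n - 4*(n%3))/3) (by omega) hn
end

section
/- Let G be a graph, v a support vertex of G, and G' the graph obtained from G by adding a new vertex v' adjacent only to v. Then (D,T) is a DT-pair of G if and only if (D ∪ {v'}, T) is a DT-pair of G'. In particular, G has a DT-pair if and only if G' has a DT-pair. -/
/-- The graph obtained from `G` by adding a new vertex (`none`) adjacent only to `v`. -/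
def addLeaf {V : Type*} (G : SimpleGraph V) (v : V) : SimpleGraph (Option V) where
  Adj a b := (∃ x y, a = some x ∧ b = some y ∧ G.Adj x y) ∨
    (a = none ∧ b = some v) ∨ (a = some v ∧ b = none)
  symm := by
    constructor
    rintro a b (⟨x, y, rfl, rfl, h⟩ | ⟨rfl, rfl⟩ | ⟨rfl, rfl⟩)
    · exact Or.inl ⟨y, x, rfl, rfl, h.symm⟩
    · exact Or.inr (Or.inr ⟨rfl, rfl⟩)
    · exact Or.inr (Or.inl ⟨rfl, rfl⟩)
  loopless := by
    constructor
    rintro a (⟨x, y, rfl, h, hxy⟩ | ⟨rfl, h⟩ | ⟨h, h'⟩)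
    · exact G.loopless.irrefl x (by cases h; exact hxy)
    · exact Option.some_ne_none v h.symm
    · exact Option.some_ne_none v (h.symm.trans h')

namespace SimpleGraph

variable {V : Type*} {G : SimpleGraph V} {l v : V}

theorem neighborSet_eq_singleton_of_degree_eq_one [Fintype (G.neighborSet l)]
    (hl : G.degree l = 1) (hadj : G.Adj l v) : G.neighborSet l = {v} := by
  obtain ⟨w, -, huniq⟩ := degree_eq_one_iff_existsUnique_adj.mp hl
  ext y
  exact ⟨fun hy => (huniq y hy).trans (huniq v hadj).symm, fun hy => hy ▸ hadj⟩

end SimpleGraph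

section addLeaf

variable {V : Type*} {G : SimpleGraph V} {v x y : V}

@[simp]
theorem addLeaf_adj_some_some : (addLeaf G v).Adj (some x) (some y) ↔ G.Adj x y := by
  simp [addLeaf]

@[simp]
theorem addLeaf_adj_some_none : (addLeaf G v).Adj (some x) none ↔ x = v := by
  simp [addLeaf, eq_comm]

@[simp]
theorem addLeaf_adj_none {u : Option V} : (addLeaf G v).Adj none u ↔ u = some v := by
  simp [addLeaf]

theorem addLeaf_neighborSet_none : (addLeaf G v).neighborSet none = {some v} := by
  ext u
  simp

end addLeaf

section DTPair

variable {V : Type*} {G : SimpleGraph V} {D T : Set V} {l v : V}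

theorem TotallyDominates.mem_of_neighborSet_eq_singleton (hT : TotallyDominates G T)
    (hl : G.neighborSet l = {v}) : v ∈ T := by
  obtain ⟨u, huT, hlu⟩ := hT l
  rwa [← Set.mem_singleton_iff.mp (hl ▸ hlu : u ∈ ({v} : Set V))]

theorem Dominates.of_addLeaf {D' : Set (Option V)} (hD' : Dominates (addLeaf G v) D')
    (hl : G.neighborSet l = {v}) : Dominates G (some ⁻¹' D') := by
  have hadj : ∀ {y}, G.Adj l y ↔ y = v := by
    intro y
    rw [← SimpleGraph.mem_neighborSet, hl, Set.mem_singleton_iff]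
  have hlv : G.Adj l v := hadj.mpr rfl
  intro x hx
  obtain ⟨_ | u, huD, hxu⟩ := hD' (some x) hx
  · obtain rfl := addLeaf_adj_some_none.mp hxu
    refine ⟨l, ?_, hlv.symm⟩
    by_contra hlD
    obtain ⟨_ | w, hwD, hlw⟩ := hD' (some l) hlD
    · exact hlv.ne (addLeaf_adj_some_none.mp hlw)
    · exact hx (hadj.mp (addLeaf_adj_some_some.mp hlw) ▸ hwD)
  · exact ⟨u, huD, addLeaf_adj_some_some.mp hxu⟩

theorem TotallyDominates.of_addLeaf {T' : Set (Option V)}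
    (hT' : TotallyDominates (addLeaf G v) T') (hnone : none ∉ T') :
    TotallyDominates G (some ⁻¹' T') := by
  intro x
  obtain ⟨_ | u, huT, hxu⟩ := hT' (some x)
  · exact absurd huT hnone
  · exact ⟨u, huT, addLeaf_adj_some_some.mp hxu⟩

theorem DTPair.none_mem_of_addLeaf {D' T' : Set (Option V)} (h : DTPair (addLeaf G v) D' T') :
    none ∈ D' := by
  obtain ⟨hdisj, hD', hT'⟩ := h
  have hvT' := hT'.mem_of_neighborSet_eq_singleton addLeaf_neighborSet_none
  by_contra hnone
  obtain ⟨u, huD, hu⟩ := hD' none hnone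
  exact hdisj.notMem_of_mem_left (addLeaf_adj_none.mp hu ▸ huD) hvT'

theorem DTPair.of_addLeaf {D' T' : Set (Option V)} (h : DTPair (addLeaf G v) D' T')
    (hl : G.neighborSet l = {v}) : DTPair G (some ⁻¹' D') (some ⁻¹' T') := by
  have hnone : none ∉ T' := h.1.notMem_of_mem_left h.none_mem_of_addLeaf
  obtain ⟨hdisj, hD', hT'⟩ := h
  exact ⟨hdisj.preimage _, hD'.of_addLeaf hl, hT'.of_addLeaf hnone⟩

theorem Dominates.addLeaf (hD : Dominates G D) :
    Dominates (addLeaf G v) (some '' D ∪ {none}) := by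
  rintro (_ | x) hx
  · exact absurd (Or.inr rfl) hx
  · obtain ⟨u, huD, hxu⟩ := hD x fun h => hx (Or.inl ⟨x, h, rfl⟩)
    exact ⟨some u, Or.inl ⟨u, huD, rfl⟩, addLeaf_adj_some_some.mpr hxu⟩

theorem TotallyDominates.addLeaf (hT : TotallyDominates G T) (hv : v ∈ T) :
    TotallyDominates (addLeaf G v) (some '' T) := by
  rintro (_ | x)
  · exact ⟨some v, ⟨v, hv, rfl⟩, addLeaf_adj_none.mpr rfl⟩
  · obtain ⟨u, huT, hxu⟩ := hT x
    exact ⟨some u, ⟨u, huT, rfl⟩, addLeaf_adj_some_some.mpr hxu⟩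

theorem DTPair.addLeaf (h : DTPair G D T) (hl : G.neighborSet l = {v}) :
    DTPair (addLeaf G v) (some '' D ∪ {none}) (some '' T) := by
  obtain ⟨hdisj, hD, hT⟩ := h
  refine ⟨?_, hD.addLeaf, hT.addLeaf (hT.mem_of_neighborSet_eq_singleton hl)⟩
  rw [Set.disjoint_union_left, Set.disjoint_singleton_left]
  exact ⟨(Set.disjoint_image_iff (Option.some_injective V)).mpr hdisj, by simp⟩

end DTPair

/-- Adding a new leaf `v'` adjacent to a support vertex `v` of `G`:
`(D, T)` is a DT-pair of `G` iff `(D ∪ {v'}, T)` is a DT-pair of `G'`;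
in particular `G` has a DT-pair iff `G'` has one. -/
theorem addLeaf_DTPair_iff {V : Type*} [Fintype V] (G : SimpleGraph V)
    [DecidableRel G.Adj] (v : V) (hv : ∃ l, G.Adj v l ∧ G.degree l = 1) :
    (∀ D T : Set V,
      DTPair G D T ↔
        DTPair (addLeaf G v) ((some '' D) ∪ {none}) (some '' T)) ∧
    (HasDTPair G ↔ HasDTPair (addLeaf G v)) := by
  obtain ⟨l, hvl, hl⟩ := hv
  have hleaf := G.neighborSet_eq_singleton_of_degree_eq_one hl hvl.symm
  refine ⟨fun D T => ⟨fun h => h.addLeaf hleaf, fun h => ?_⟩,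
    ⟨fun ⟨D, T, h⟩ => ⟨_, _, h.addLeaf hleaf⟩, fun ⟨D', T', h⟩ => ⟨_, _, h.of_addLeaf hleaf⟩⟩⟩
  have hsome := Option.some_injective V
  have hD : some ⁻¹' (some '' D ∪ {none}) = D := by
    rw [Set.preimage_union, Set.preimage_image_eq _ hsome, Set.union_eq_left]
    rintro x ⟨⟩
  rw [← hD, ← Set.preimage_image_eq T hsome]
  exact h.of_addLeaf hleaf
end

section
/- If H is a star K_{1,m} (m ≥ 1), then the corona H ∘ K_1 is a minimal DTDP-graph: H ∘ K_1 has a DT-pair but for every edge e of H ∘ K_1, the graph (H ∘ K_1) − e has no DT-pair. -/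
/-- The corona `H ∘ K₁`: for each vertex `v` of `H` (copy `Sum.inl v`) a new leaf
`Sum.inr v` is attached. -/
def corona {V : Type*} (H : SimpleGraph V) : SimpleGraph (V ⊕ V) where
  Adj a b := match a, b with
    | Sum.inl u, Sum.inl w => H.Adj u w
    | Sum.inl u, Sum.inr w => u = w
    | Sum.inr u, Sum.inl w => u = w
    | Sum.inr _, Sum.inr _ => False
  symm := by
    refine ⟨?_⟩
    rintro (u | u) (w | w) h
    · exact h.symm
    · exact h.symm
    · exact h.symm
    · exact h
  loopless := by
    refine ⟨?_⟩
    rintro (u | u) h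
    · exact H.ne_of_adj h rfl
    · exact h

/-- The star `K_{1,m}`: center `none`, leaves `some i` for `i : Fin m`. -/
def starGraph (m : ℕ) : SimpleGraph (Option (Fin m)) :=
  SimpleGraph.fromRel (fun a _ => a = none)

/-!
In `H ∘ K₁` the attached leaves dominate, and the copy of `H` totally dominates as soon as `H` has
no isolated vertex. Deleting a pendant edge isolates its leaf, and deleting an edge `uw` of `H`
where `u` is a leaf of `H` cuts off `u` with its pendant leaf as a `K₂`-component; neither an
isolated vertex nor a `K₂`-component is compatible with a DT-pair. Every edge of a star has a leaf
as an endpoint.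
-/

def IsMinimalDTDPGraph {V : Type*} (G : SimpleGraph V) : Prop :=
  HasDTPair G ∧ ∀ e ∈ G.edgeSet, ¬ HasDTPair (G.deleteEdges {e})

/-- Both ends must lie in `T`, and then `x` cannot be dominated. With `x = y` this covers isolated
vertices. -/
theorem not_hasDTPair_of_neighborSet_subset {V : Type*} {G : SimpleGraph V} {x y : V}
    (hx : G.neighborSet x ⊆ {y}) (hy : G.neighborSet y ⊆ {x}) : ¬ HasDTPair G := by
  rintro ⟨D, T, hDT, hD, hT⟩
  have mem_T {a b : V} (hab : G.neighborSet a ⊆ {b}) : b ∈ T := by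
    obtain ⟨u, huT, hau⟩ := hT a
    obtain rfl : u = b := hab hau
    exact huT
  obtain ⟨u, huD, hxu⟩ := hD x (hDT.notMem_of_mem_right (mem_T hy))
  obtain rfl : u = y := hx hxu
  exact hDT.notMem_of_mem_left huD (mem_T hx)

section Corona

open SimpleGraph

variable {V : Type*} (H : SimpleGraph V)

theorem corona_adj_inr_iff {u : V} {b : V ⊕ V} :
    (corona H).Adj (Sum.inr u) b ↔ b = Sum.inl u := by
  cases b <;> simp [corona, eq_comm]

theorem hasDTPair_corona (h_adj : ∀ v, ∃ w, H.Adj v w) : HasDTPair (corona H) := by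
  refine ⟨Set.range Sum.inr, Set.range Sum.inl, Set.isCompl_range_inl_range_inr.disjoint.symm,
    ?_, ?_⟩
  · rintro (v | v) hv
    · exact ⟨Sum.inr v, ⟨v, rfl⟩, rfl⟩
    · exact absurd ⟨v, rfl⟩ hv
  · rintro (v | v)
    · obtain ⟨w, hvw⟩ := h_adj v
      exact ⟨Sum.inl w, ⟨w, rfl⟩, hvw⟩
    · exact ⟨Sum.inl v, ⟨v, rfl⟩, rfl⟩

theorem not_hasDTPair_corona_deleteEdges_inl_inr (v : V) :
    ¬ HasDTPair ((corona H).deleteEdges {s(Sum.inl v, Sum.inr v)}) := by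
  have h_isolated : ((corona H).deleteEdges {s(Sum.inl v, Sum.inr v)}).neighborSet (Sum.inr v)
      ⊆ {Sum.inr v} := by
    intro z hz
    rw [mem_neighborSet, deleteEdges_adj, corona_adj_inr_iff] at hz
    obtain ⟨rfl, hne⟩ := hz
    exact absurd Sym2.eq_swap hne
  exact not_hasDTPair_of_neighborSet_subset h_isolated h_isolated

theorem not_hasDTPair_corona_deleteEdges_inl_inl {u w : V} (hu : H.neighborSet u ⊆ {w}) :
    ¬ HasDTPair ((corona H).deleteEdges {s(Sum.inl u, Sum.inl w)}) := by
  refine not_hasDTPair_of_neighborSet_subset (x := Sum.inl u) (y := Sum.inr u) ?_ ?_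
  · rintro (z | z) hz <;> rw [mem_neighborSet, deleteEdges_adj] at hz
    · obtain rfl : z = w := hu hz.1
      exact absurd rfl hz.2
    · obtain rfl : u = z := hz.1
      rfl
  · intro z hz
    rw [mem_neighborSet, deleteEdges_adj, corona_adj_inr_iff] at hz
    exact hz.1

theorem isMinimalDTDPGraph_corona (h_adj : ∀ v, ∃ w, H.Adj v w)
    (h_leaf : ∀ u w, H.Adj u w → H.neighborSet u ⊆ {w} ∨ H.neighborSet w ⊆ {u}) :
    IsMinimalDTDPGraph (corona H) := by
  refine ⟨hasDTPair_corona H h_adj, fun e he => ?_⟩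
  induction e using Sym2.ind with | _ a b => ?_
  rw [mem_edgeSet] at he
  rcases a with u | u <;> rcases b with w | w
  · rcases h_leaf u w he with hu | hw
    · exact not_hasDTPair_corona_deleteEdges_inl_inl H hu
    · rw [Sym2.eq_swap]
      exact not_hasDTPair_corona_deleteEdges_inl_inl H hw
  · obtain rfl : u = w := he
    exact not_hasDTPair_corona_deleteEdges_inl_inr H u
  · obtain rfl : u = w := he
    rw [Sym2.eq_swap]
    exact not_hasDTPair_corona_deleteEdges_inl_inr H u
  · exact he.elim

end Corona

section Star

variable {m : ℕ}

theorem starGraph_adj_iff {a b : Option (Fin m)} :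
    (starGraph m).Adj a b ↔ a ≠ b ∧ (a = none ∨ b = none) := by
  simp [starGraph]

theorem starGraph_exists_adj (hm : 1 ≤ m) (v : Option (Fin m)) : ∃ w, (starGraph m).Adj v w := by
  cases v with
  | none => exact ⟨some ⟨0, hm⟩, starGraph_adj_iff.2 (by simp)⟩
  | some i => exact ⟨none, starGraph_adj_iff.2 (by simp)⟩

theorem starGraph_neighborSet_some (i : Fin m) : (starGraph m).neighborSet (some i) ⊆ {none} :=
  fun _ h => ((starGraph_adj_iff.1 h).2.resolve_left (Option.some_ne_none i))

theorem starGraph_neighborSet_subset_of_adj {u w : Option (Fin m)} (h : (starGraph m).Adj u w) :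
    (starGraph m).neighborSet u ⊆ {w} ∨ (starGraph m).neighborSet w ⊆ {u} := by
  rcases u with _ | i
  · rcases w with _ | j
    · exact absurd h (starGraph m).irrefl
    · exact Or.inr (starGraph_neighborSet_some j)
  · obtain rfl : w = none := (starGraph_adj_iff.1 h).2.resolve_left (Option.some_ne_none i)
    exact Or.inl (starGraph_neighborSet_some i)

end Star

/-- If `H = K_{1,m}` with `m ≥ 1`, then the corona `H ∘ K₁` is a minimal DTDP-graph:
it has a DT-pair, but deleting any edge destroys this property. -/
theorem corona_star_minimal (m : ℕ) (hm : 1 ≤ m) :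
    HasDTPair (corona (starGraph m)) ∧
    ∀ e ∈ (corona (starGraph m)).edgeSet,
      ¬ HasDTPair ((corona (starGraph m)).deleteEdges {e}) :=
  isMinimalDTDPGraph_corona _ (starGraph_exists_adj hm) fun _ _ => starGraph_neighborSet_subset_of_adj
end

section
/- No rooted tree in which every leaf is at distance exactly 2 from the root has a DT-pair. -/
section Aux

variable {V : Type*} {G : SimpleGraph V} {r : V}

lemma tree_exists_shortest_path (ht : G.IsTree) (v : V) :
    ∃ p : G.Walk v r, p.IsPath ∧ p.length = G.dist v r := by
  classical
  obtain ⟨p, hp⟩ := ht.isConnected.exists_walk_length_eq_dist v r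
  refine ⟨p.bypass, p.bypass_isPath, le_antisymm ?_ (SimpleGraph.dist_le _)⟩
  calc p.bypass.length ≤ p.length := p.length_bypass_le
    _ = _ := hp

lemma tree_path_length (ht : G.IsTree) {v : V} (p : G.Walk v r) (hp : p.IsPath) :
    p.length = G.dist v r := by
  obtain ⟨q, hq, hql⟩ := tree_exists_shortest_path (r := r) ht v
  rw [(ht.existsUnique_path v r).unique hp hq, hql]

lemma not_mem_support_of_dist_lt (_ht : G.IsTree) {v u : V} (p : G.Walk u r)
    (hlt : p.length < G.dist v r) : v ∉ p.support := by
  classical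
  intro hv
  have h1 : G.dist v r ≤ (p.dropUntil v hv).length := SimpleGraph.dist_le _
  have h2 := SimpleGraph.Walk.length_dropUntil_le p hv
  omega

lemma tree_adj_dist (ht : G.IsTree) {u v : V} (h : G.Adj u v) :
    G.dist u r = G.dist v r + 1 ∨ G.dist v r = G.dist u r + 1 := by
  have hconn := ht.isConnected
  have huv : G.dist u v = 1 := SimpleGraph.dist_eq_one_iff_adj.mpr h
  have hvu : G.dist v u = 1 := SimpleGraph.dist_eq_one_iff_adj.mpr h.symm
  have h1 : G.dist u r ≤ G.dist u v + G.dist v r := hconn.dist_triangle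
  have h2 : G.dist v r ≤ G.dist v u + G.dist u r := hconn.dist_triangle
  have hne : G.dist u r ≠ G.dist v r := by
    classical
    intro heq
    obtain ⟨p, hp, hpl⟩ := tree_exists_shortest_path (r := r) ht u
    have hv : v ∉ p.support := by
      intro hv
      have hsp := p.take_spec hv
      have h3 : G.dist u v ≤ (p.takeUntil v hv).length := SimpleGraph.dist_le _
      have h4 : G.dist v r ≤ (p.dropUntil v hv).length := SimpleGraph.dist_le _
      have h5 : (p.takeUntil v hv).length + (p.dropUntil v hv).length = p.length := by
        conv_rhs => rw [← hsp]
        rw [SimpleGraph.Walk.length_append]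
      omega
    have hlen := tree_path_length ht (SimpleGraph.Walk.cons h.symm p) (hp.cons hv)
    rw [SimpleGraph.Walk.length_cons] at hlen
    omega
  omega

lemma tree_unique_parent (ht : G.IsTree) {v p x : V} (hvp : G.Adj v p) (hvx : G.Adj v x)
    (hp : G.dist p r + 1 = G.dist v r) (hx : G.dist x r + 1 = G.dist v r) : p = x := by
  obtain ⟨qp, hqp, hqpl⟩ := tree_exists_shortest_path (r := r) ht p
  obtain ⟨qx, hqx, hqxl⟩ := tree_exists_shortest_path (r := r) ht x
  have hv1 : v ∉ qp.support := not_mem_support_of_dist_lt ht qp (by omega)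
  have hv2 : v ∉ qx.support := not_mem_support_of_dist_lt ht qx (by omega)
  have heq := (ht.existsUnique_path v r).unique (hqp.cons hv1 (h := hvp)) (hqx.cons hv2 (h := hvx))
  have hs := congrArg SimpleGraph.Walk.support heq
  rw [SimpleGraph.Walk.support_cons, SimpleGraph.Walk.support_cons,
      qp.support_eq_cons, qx.support_eq_cons] at hs
  simp only [List.cons.injEq] at hs
  exact hs.2.1

lemma tree_exists_parent (ht : G.IsTree) {v : V} (hv : v ≠ r) :
    ∃ u, G.Adj v u ∧ G.dist u r + 1 = G.dist v r := by
  obtain ⟨p, hp, hpl⟩ := tree_exists_shortest_path (r := r) ht v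
  cases p with
  | nil => exact absurd rfl hv
  | @cons _ u _ h q =>
    refine ⟨u, h, ?_⟩
    have h1 : G.dist u r ≤ q.length := SimpleGraph.dist_le q
    have h2 : q.length + 1 = G.dist v r := by simpa using hpl
    have h3 : G.dist v r ≤ G.dist v u + G.dist u r := ht.isConnected.dist_triangle
    have h4 : G.dist v u = 1 := SimpleGraph.dist_eq_one_iff_adj.mpr h
    omega

end Aux

/-- No rooted tree in which every leaf is at distance exactly `2` from the root
has a DT-pair. -/
theorem no_DTPair_of_leaves_at_distance_two {V : Type*} [Fintype V]
    (T : SimpleGraph V) [DecidableRel T.Adj] (r : V) (htree : T.IsTree)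
    (hleaf : ∀ v, T.degree v = 1 → T.dist r v = 2) :
    ¬ HasDTPair T := by
  rintro ⟨D, T', hdisj, hdom, htot⟩
  have hconn := htree.isConnected
  have hd0 : ∀ v : V, T.dist v r = 0 ↔ v = r := fun v => hconn.dist_eq_zero_iff
  -- every maximizer of the distance that is not the root is a leaf
  have hdeg1 : ∀ m, (∀ v, T.dist v r ≤ T.dist m r) → m ≠ r → T.degree m = 1 := by
    intro m hmax hmr
    obtain ⟨p, hp, hpd⟩ := tree_exists_parent (r := r) htree hmr
    have hsing : T.neighborFinset m = {p} := by
      apply Finset.eq_singleton_iff_unique_mem.mpr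
      refine ⟨by simpa [SimpleGraph.mem_neighborFinset] using hp, ?_⟩
      intro x hx
      rw [SimpleGraph.mem_neighborFinset] at hx
      rcases tree_adj_dist (r := r) htree hx with h | h
      · exact tree_unique_parent (r := r) htree hx hp (by omega) (by omega)
      · have := hmax x; omega
    rw [SimpleGraph.degree, hsing, Finset.card_singleton]
  -- the depth is at most 2
  have hdepth : ∀ v, T.dist v r ≤ 2 := by
    have hne : Nonempty V := hconn.nonempty
    obtain ⟨m, hm⟩ := Finite.exists_max (fun v => T.dist v r)
    intro v
    have h2 : T.dist m r ≤ 2 := by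
      by_cases hmr : m = r
      · subst hmr; simp [SimpleGraph.dist_self]
      · have := hleaf m (hdeg1 m hm hmr)
        rw [SimpleGraph.dist_comm] at this
        omega
    exact le_trans (hm v) h2
  -- structure of vertices at distance two
  have leafnb : ∀ w, T.dist w r = 2 →
      ∃ c, T.Adj w c ∧ T.dist c r = 1 ∧ ∀ x, T.Adj w x → x = c := by
    intro w hw
    have hwr : w ≠ r := by intro h; rw [(hd0 w).mpr h] at hw; omega
    obtain ⟨c, hc, hcd⟩ := tree_exists_parent (r := r) htree hwr
    refine ⟨c, hc, by omega, ?_⟩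
    intro x hx
    rcases tree_adj_dist (r := r) htree hx with h | h
    · exact tree_unique_parent (r := r) htree hx hc (by omega) (by omega)
    · have := hdepth x; omega
  -- every neighbor of the root is in T'
  have childInT : ∀ c, T.Adj r c → c ∈ T' := by
    intro c hc
    have hcd : T.dist c r = 1 := SimpleGraph.dist_eq_one_iff_adj.mpr hc.symm
    have hcr : c ≠ r := fun h => by rw [h] at hcd; simp at hcd
    have hdegc : T.degree c ≠ 1 := by
      intro h
      have := hleaf c h
      rw [SimpleGraph.dist_comm] at this
      omega
    have hrmem : r ∈ T.neighborFinset c := by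
      rw [SimpleGraph.mem_neighborFinset]; exact hc.symm
    have hcard : 1 < (T.neighborFinset c).card := by
      rcases Nat.lt_or_ge (T.neighborFinset c).card 2 with h | h
      · exfalso
        have h1 : 0 < (T.neighborFinset c).card := Finset.card_pos.mpr ⟨r, hrmem⟩
        have h2 : T.degree c = (T.neighborFinset c).card := rfl
        exact hdegc (by omega)
      · omega
    obtain ⟨w, hwmem, hwr⟩ := Finset.exists_mem_ne hcard r
    rw [SimpleGraph.mem_neighborFinset] at hwmem
    have hwd : T.dist w r = 2 := by
      rcases tree_adj_dist (r := r) htree hwmem with h | h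
      · exact absurd ((hd0 w).mp (by omega)) hwr
      · omega
    obtain ⟨c', hc', hc'd, huniq⟩ := leafnb w hwd
    have hcc : c = c' := huniq c hwmem.symm
    obtain ⟨u, huT, hadj⟩ := htot w
    have huc : u = c' := huniq u hadj
    rw [hcc, ← huc]
    exact huT
  -- every vertex at distance two is in D
  have leafInD : ∀ w, T.dist w r = 2 → w ∈ D := by
    intro w hw
    obtain ⟨c, hc, hcd, huniq⟩ := leafnb w hw
    have hcT : c ∈ T' := childInT c (SimpleGraph.dist_eq_one_iff_adj.mp hcd).symm
    by_contra hwD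
    obtain ⟨u, huD, hadj⟩ := hdom w hwD
    have : u = c := huniq u hadj
    subst this
    exact Set.disjoint_left.mp hdisj huD hcT
  -- the root is in T'
  obtain ⟨c0, hc0T, hc0adj⟩ := htot r
  have hc0d : T.dist c0 r = 1 := SimpleGraph.dist_eq_one_iff_adj.mpr hc0adj.symm
  have hrT : r ∈ T' := by
    obtain ⟨u, huT, hadj⟩ := htot c0
    rcases tree_adj_dist (r := r) htree hadj with h | h
    · -- dist c0 r = dist u r + 1, so dist u r = 0, u = r
      have : u = r := (hd0 u).mp (by omega)
      rwa [this] at huT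
    · -- dist u r = 2, so u ∈ D, contradiction
      exact absurd huT (Set.disjoint_left.mp hdisj (leafInD u (by omega)))
  have hrD : r ∉ D := fun h => Set.disjoint_left.mp hdisj h hrT
  obtain ⟨u, huD, hadj⟩ := hdom r hrD
  exact Set.disjoint_left.mp hdisj huD (childInT u hadj)
end

section
/- Let H be a finite simple graph with no isolated vertices, and let S_2(H) be the graph obtained from H by subdividing each edge twice (replacing each edge uv by a path u, u_e, v_e, v). Then the pair (V(H), V(S_2(H)) \ V(H)) is a DT-pair in S_2(H): the original vertices form a dominating set and the subdivision vertices form a total dominating set. -/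
/-- The 2-subdivision `S₂(H)` of `H`: each edge `uv` of `H` is replaced by the path
`u — u_e — v_e — v`. The subdivision vertex `u_e` on the edge `uv` (nearer to `u`)
is encoded as `Sum.inr ⟨(u, v), _⟩`. -/
def S2 {V : Type*} (H : SimpleGraph V) :
    SimpleGraph (V ⊕ {p : V × V // H.Adj p.1 p.2}) where
  Adj a b := match a, b with
    | Sum.inl u, Sum.inr p => u = p.1.1
    | Sum.inr p, Sum.inl u => u = p.1.1
    | Sum.inr p, Sum.inr q => p.1.1 = q.1.2 ∧ p.1.2 = q.1.1
    | Sum.inl _, Sum.inl _ => False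
  symm := by
    constructor
    rintro (u | p) (w | q) h
    · exact h
    · exact h
    · exact h
    · exact ⟨h.2.symm, h.1.symm⟩
  loopless := by
    constructor
    rintro (u | p) h
    · exact h
    · exact H.loopless.irrefl p.1.1 (h.1 ▸ p.2)

namespace S2

variable {V : Type*} (H : SimpleGraph V)

theorem adj_inr_inl (p : {p : V × V // H.Adj p.1 p.2}) :
    (S2 H).Adj (Sum.inr p) (Sum.inl p.1.1) :=
  rfl

theorem adj_inr_swap (p : {p : V × V // H.Adj p.1 p.2}) :
    (S2 H).Adj (Sum.inr p) (Sum.inr ⟨p.1.swap, p.2.symm⟩) :=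
  ⟨rfl, rfl⟩

theorem dominates_range_inl : Dominates (S2 H) (Set.range Sum.inl) := by
  rintro (v | p) hv
  · exact absurd (Set.mem_range_self v) hv
  · exact ⟨_, Set.mem_range_self _, adj_inr_inl H p⟩

theorem totallyDominates_range_inr (h : ∀ v : V, ∃ u, H.Adj v u) :
    TotallyDominates (S2 H) (Set.range Sum.inr) := by
  rintro (v | p)
  · obtain ⟨u, hu⟩ := h v
    exact ⟨_, Set.mem_range_self _, (adj_inr_inl H ⟨(v, u), hu⟩).symm⟩
  · exact ⟨_, Set.mem_range_self _, adj_inr_swap H p⟩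

end S2

/-- In the 2-subdivision of a graph `H` with no isolated vertices, the original
vertices form a dominating set and the subdivision vertices form a total dominating
set; together they form a DT-pair. -/
theorem S2_DTPair {V : Type*} (H : SimpleGraph V) (h : ∀ v : V, ∃ u, H.Adj v u) :
    DTPair (S2 H) (Set.range Sum.inl) (Set.range Sum.inr) :=
  ⟨Set.isCompl_range_inl_range_inr.disjoint, S2.dominates_range_inl H,
    S2.totallyDominates_range_inr H h⟩
end

section
/- If G is a connected minimal DTDP-graph and (D,T) is a DT-pair in G, then D is a maximal independent set in G. -/
/-- `G` is a minimal DTDP-graph: `G` has a DT-pair, but for every edge `e` of `G`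
the graph `G − e` has no DT-pair. -/
def MinimalDTDP {V : Type*} (G : SimpleGraph V) : Prop :=
  HasDTPair G ∧ ∀ e ∈ G.edgeSet, ¬ HasDTPair (G.deleteEdges {e})

/-- `S` is an independent set of `G`. -/
def IsIndep {V : Type*} (G : SimpleGraph V) (S : Set V) : Prop :=
  ∀ a ∈ S, ∀ b ∈ S, ¬ G.Adj a b

/-- If `G` is a connected minimal DTDP-graph and `(D,T)` is a DT-pair in `G`, then
`D` is a maximal independent set in `G`. -/
theorem D_maximal_independent {V : Type*} (G : SimpleGraph V)
    (hconn : G.Connected) (hmin : MinimalDTDP G) (D T : Set V) (h : DTPair G D T) :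
    IsIndep G D ∧ ∀ D' : Set V, D ⊆ D' → IsIndep G D' → D' = D := by
  obtain ⟨hdisj, hdom, htot⟩ := h
  constructor
  · intro a ha b hb hab
    apply hmin.2 s(a,b) hab
    refine ⟨D, T, hdisj, ?_, ?_⟩
    · intro v hv
      obtain ⟨u, hu, hadj⟩ := hdom v hv
      refine ⟨u, hu, ?_⟩
      rw [SimpleGraph.deleteEdges_adj]
      refine ⟨hadj, ?_⟩
      simp only [Set.mem_singleton_iff, Sym2.eq_iff]
      rintro (⟨rfl, rfl⟩ | ⟨rfl, rfl⟩)
      · exact hv ha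
      · exact hv hb
    · intro v
      obtain ⟨u, hu, hadj⟩ := htot v
      refine ⟨u, hu, ?_⟩
      rw [SimpleGraph.deleteEdges_adj]
      refine ⟨hadj, ?_⟩
      simp only [Set.mem_singleton_iff, Sym2.eq_iff]
      rintro (⟨rfl, rfl⟩ | ⟨rfl, rfl⟩)
      · exact hdisj.ne_of_mem hb hu rfl
      · exact hdisj.ne_of_mem ha hu rfl
  · intro D' hsub hind
    ext x
    refine ⟨fun hx => ?_, fun hx => hsub hx⟩
    by_contra hxD
    obtain ⟨u, hu, hadj⟩ := hdom x hxD
    exact hind x hx u (hsub hu) hadj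
end

section
/- If G is a connected minimal DTDP-graph (a simple graph, so no loops) and (D,T) is a DT-pair in G, then every connected component of the induced subgraph G[T] is a star: it has a vertex adjacent to all other vertices of the component, and all other vertices of the component have degree 1 in G[T]. -/
lemma walk_closed {α : Type*} {H : SimpleGraph α} (S : Set α)
    (hS : ∀ x ∈ S, ∀ z, H.Adj x z → z ∈ S) {x y : α} (p : H.Walk x y) (hx : x ∈ S) :
    y ∈ S := by
  induction p with
  | nil => exact hx
  | cons hadj q ih => exact ih (hS _ hx _ hadj)

lemma star_center {α : Type*} (H : SimpleGraph α)
    (key : ∀ u v, H.Adj u v → (∀ z, H.Adj u z → z = v) ∨ (∀ z, H.Adj v z → z = u))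
    (c a b : α) (hab : a ≠ b) (ha : H.Adj c a) (hb : H.Adj c b) :
    ∀ y, H.Reachable c y → y ≠ c → H.Adj c y ∧ ∀ z, H.Adj y z → z = c := by
  have huniq : ∀ x, H.Adj c x → ∀ z, H.Adj x z → z = c := by
    intro x hx
    rcases key c x hx with hk | hk
    · exact absurd ((hk a ha).trans (hk b hb).symm) hab
    · exact hk
  intro y hy hyc
  set S : Set α := {c} ∪ {z | H.Adj c z} with hSdef
  have hclosed : ∀ x ∈ S, ∀ z, H.Adj x z → z ∈ S := by
    intro x hx z hz
    rcases hx with hx | hx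
    · right; rwa [Set.mem_singleton_iff.mp hx] at hz
    · left; exact huniq x hx z hz
  obtain ⟨p⟩ := hy
  have hyS : y ∈ S := walk_closed S hclosed p (Or.inl rfl)
  rcases hyS with hyS | hyS
  · exact absurd hyS hyc
  · exact ⟨hyS, huniq y hyS⟩

lemma key_lemma {V : Type*} (G : SimpleGraph V) (hmin : MinimalDTDP G) (D T : Set V)
    (h : DTPair G D T) : ∀ u v : T, (G.induce T).Adj u v →
      (∀ z, (G.induce T).Adj u z → z = v) ∨ (∀ z, (G.induce T).Adj v z → z = u) := by
  intro u v huv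
  by_contra hcon
  push_neg at hcon
  obtain ⟨⟨z, hz, hzv⟩, ⟨w, hw, hwu⟩⟩ := hcon
  have huvG : G.Adj ↑u ↑v := huv
  have hne : (u : V) ≠ (v : V) := huvG.ne
  apply hmin.2 (s(↑u, ↑v)) huvG
  refine ⟨D, T, h.1, ?_, ?_⟩
  · intro x hx
    obtain ⟨d, hd, hadj⟩ := h.2.1 x hx
    refine ⟨d, hd, ?_⟩
    rw [SimpleGraph.deleteEdges_adj]
    refine ⟨hadj, ?_⟩
    simp only [Set.mem_singleton_iff, Sym2.eq_iff]
    rintro (⟨rfl, rfl⟩ | ⟨rfl, rfl⟩)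
    · exact (Set.disjoint_left.mp h.1 hd) v.2
    · exact (Set.disjoint_left.mp h.1 hd) u.2
  · intro x
    obtain ⟨t, ht, hadj⟩ := h.2.2 x
    by_cases hme : s(x, t) = s((u : V), v)
    · rw [Sym2.eq_iff] at hme
      rcases hme with ⟨rfl, rfl⟩ | ⟨rfl, rfl⟩
      · refine ⟨↑z, z.2, ?_⟩
        rw [SimpleGraph.deleteEdges_adj]
        refine ⟨hz, ?_⟩
        simp only [Set.mem_singleton_iff, Sym2.eq_iff]
        rintro (⟨-, hzv'⟩ | ⟨h1, -⟩)
        · exact hzv (Subtype.ext hzv')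
        · exact hne h1
      · refine ⟨↑w, w.2, ?_⟩
        rw [SimpleGraph.deleteEdges_adj]
        refine ⟨hw, ?_⟩
        simp only [Set.mem_singleton_iff, Sym2.eq_iff]
        rintro (⟨h1, -⟩ | ⟨-, h2⟩)
        · exact hne h1.symm
        · exact hwu (Subtype.ext h2)
    · exact ⟨t, ht, (SimpleGraph.deleteEdges_adj).mpr ⟨hadj, hme⟩⟩

/-- If `G` is a connected minimal DTDP-graph and `(D,T)` is a DT-pair in `G`, then
every connected component of the induced subgraph `G[T]` is a star: it has a vertex
adjacent (in `G[T]`) to every other vertex of the component, and every other vertex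
of the component has degree `1` in `G[T]`, i.e. its unique neighbor is the center. -/
theorem components_of_induced_T_are_stars {V : Type*} (G : SimpleGraph V)
    (hconn : G.Connected) (hmin : MinimalDTDP G) (D T : Set V) (h : DTPair G D T) :
    ∀ C : (G.induce T).ConnectedComponent,
      ∃ c, (G.induce T).connectedComponentMk c = C ∧
        ∀ y, (G.induce T).connectedComponentMk y = C → y ≠ c →
          (G.induce T).Adj c y ∧ ∀ z, (G.induce T).Adj y z → z = c := by
  set H := G.induce T with hH
  have key := key_lemma G hmin D T h
  -- no isolated vertices
  have hniso : ∀ v : T, ∃ n : T, H.Adj v n := by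
    intro v
    obtain ⟨t, ht, hadj⟩ := h.2.2 ↑v
    exact ⟨⟨t, ht⟩, hadj⟩
  intro C
  obtain ⟨v, hv⟩ := C.exists_rep
  obtain ⟨n, hn⟩ := hniso v
  by_cases hA : ∃ z, H.Adj v z ∧ z ≠ n
  · obtain ⟨z, hz, hzn⟩ := hA
    refine ⟨v, hv, ?_⟩
    intro y hy hyv
    have hr : H.Reachable v y := by
      rw [← hv] at hy
      exact (SimpleGraph.ConnectedComponent.eq.mp hy).symm
    exact star_center H key v z n hzn hz hn y hr hyv
  · push_neg at hA
    by_cases hB : ∃ w, H.Adj n w ∧ w ≠ v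
    · obtain ⟨w, hw, hwv⟩ := hB
      have hnC : H.connectedComponentMk n = C := by
        rw [← hv]
        exact SimpleGraph.ConnectedComponent.sound hn.symm.reachable
      refine ⟨n, hnC, ?_⟩
      intro y hy hyn
      have hr : H.Reachable n y := by
        rw [← hnC] at hy
        exact (SimpleGraph.ConnectedComponent.eq.mp hy).symm
      exact star_center H key n w v hwv hw hn.symm y hr hyn
    · push_neg at hB
      refine ⟨v, hv, ?_⟩
      intro y hy hyv
      have hr : H.Reachable v y := by
        rw [← hv] at hy
        exact (SimpleGraph.ConnectedComponent.eq.mp hy).symm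
      have hyS : y ∈ ({v, n} : Set T) := by
        obtain ⟨p⟩ := hr
        refine walk_closed _ ?_ p (Or.inl rfl)
        rintro x (rfl | hx) z hz
        · right; exact hA z hz
        · left; exact hB z (by rwa [Set.mem_singleton_iff.mp hx] at hz)
      rcases hyS with rfl | hyS
      · exact absurd rfl hyv
      · rw [Set.mem_singleton_iff.mp hyS]
        refine ⟨hn, fun z hz => hB z hz⟩
end

section
/- Let G be a connected minimal DTDP-graph with DT-pair (D,T) and let x ∈ T. If x has two distinct neighbors outside T, then every neighbor of x outside T is a leaf of G. -/
/-- Let `G` be a connected minimal DTDP-graph with DT-pair `(D,T)` and `x ∈ T`.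
If `x` has two distinct neighbors outside `T`, then every neighbor of `x` outside
`T` is a leaf of `G`. -/
theorem neighbors_outside_T_are_leaves {V : Type*} [Fintype V] (G : SimpleGraph V)
    [DecidableRel G.Adj] (hconn : G.Connected) (hmin : MinimalDTDP G)
    (D T : Set V) (h : DTPair G D T) (x : V) (hx : x ∈ T)
    (y z : V) (hy : G.Adj x y) (hyT : y ∉ T) (hz : G.Adj x z) (hzT : z ∉ T)
    (hyz : y ≠ z) :
    ∀ w, G.Adj x w → w ∉ T → G.degree w = 1 := by
  obtain ⟨hdisj, hdom, htot⟩ := h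
  obtain ⟨-, hmin2⟩ := hmin
  -- Step 1: every edge of `G` has an endpoint in `T`.
  have hT : ∀ p q : V, G.Adj p q → p ∉ T → q ∈ T := by
    intro p q hpq hpT
    by_contra hqT
    apply hmin2 s(p, q) (by rwa [SimpleGraph.mem_edgeSet])
    refine ⟨D ∪ {p, q}, T, ?_, ?_, ?_⟩
    · refine Set.disjoint_union_left.mpr ⟨hdisj, ?_⟩
      rw [Set.disjoint_left]
      intro a ha haT
      rcases ha with rfl | ha
      · exact hpT haT
      · rw [Set.mem_singleton_iff] at ha; subst ha; exact hqT haT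
    · intro a haD
      have haD' : a ∉ D := fun hh => haD (Or.inl hh)
      obtain ⟨b, hbD, hab⟩ := hdom a haD'
      refine ⟨b, Or.inl hbD, ?_⟩
      rw [SimpleGraph.deleteEdges_adj]
      refine ⟨hab, fun hmem => ?_⟩
      rw [Set.mem_singleton_iff, Sym2.eq_iff] at hmem
      rcases hmem with ⟨rfl, rfl⟩ | ⟨rfl, rfl⟩
      · exact haD (Or.inr (Or.inl rfl))
      · exact haD (Or.inr (Or.inr rfl))
    · intro a
      obtain ⟨t, htT, hat⟩ := htot a
      refine ⟨t, htT, ?_⟩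
      rw [SimpleGraph.deleteEdges_adj]
      refine ⟨hat, fun hmem => ?_⟩
      rw [Set.mem_singleton_iff, Sym2.eq_iff] at hmem
      rcases hmem with ⟨rfl, rfl⟩ | ⟨rfl, rfl⟩
      · exact hqT htT
      · exact hpT htT
  intro w hxw hwT
  -- pick v ∈ {y, z} with v ≠ w
  obtain ⟨v, hxv, hvT, hvw⟩ : ∃ v, G.Adj x v ∧ v ∉ T ∧ v ≠ w := by
    by_cases hwy : y = w
    · exact ⟨z, hz, hzT, fun hh => hyz (hwy.trans hh.symm)⟩
    · exact ⟨y, hy, hyT, hwy⟩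
  -- Step 2: w has no neighbor other than x
  have hstep : ∀ u, G.Adj w u → u = x := by
    intro u hwu
    by_contra hux
    have huT : u ∈ T := hT w u hwu hwT
    -- (D ∪ {v}, T) is a DT-pair of G − xw, contradiction with minimality
    apply hmin2 s(x, w) (by rwa [SimpleGraph.mem_edgeSet])
    refine ⟨D ∪ {v}, T, ?_, ?_, ?_⟩
    · refine Set.disjoint_union_left.mpr ⟨hdisj, ?_⟩
      rw [Set.disjoint_left]
      intro a ha haT
      rw [Set.mem_singleton_iff] at ha; subst ha; exact hvT haT
    · intro a haD
      have haD' : a ∉ D := fun hh => haD (Or.inl hh)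
      by_cases hax : a = x
      · subst hax
        refine ⟨v, Or.inr rfl, ?_⟩
        rw [SimpleGraph.deleteEdges_adj]
        refine ⟨hxv, fun hmem => ?_⟩
        rw [Set.mem_singleton_iff, Sym2.eq_iff] at hmem
        rcases hmem with ⟨-, h1⟩ | ⟨h1, -⟩
        · exact hvw h1
        · exact (G.ne_of_adj hxw) h1
      · obtain ⟨b, hbD, hab⟩ := hdom a haD'
        refine ⟨b, Or.inl hbD, ?_⟩
        rw [SimpleGraph.deleteEdges_adj]
        refine ⟨hab, fun hmem => ?_⟩
        rw [Set.mem_singleton_iff, Sym2.eq_iff] at hmem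
        rcases hmem with ⟨rfl, rfl⟩ | ⟨rfl, rfl⟩
        · exact hax rfl
        · exact (Set.disjoint_right.mp hdisj hx) hbD
    · intro a
      by_cases haw : a = w
      · subst haw
        refine ⟨u, huT, ?_⟩
        rw [SimpleGraph.deleteEdges_adj]
        refine ⟨hwu, fun hmem => ?_⟩
        rw [Set.mem_singleton_iff, Sym2.eq_iff] at hmem
        rcases hmem with ⟨h1, -⟩ | ⟨-, h1⟩
        · exact (G.ne_of_adj hxw) h1.symm
        · exact hux h1
      · obtain ⟨t, htT, hat⟩ := htot a
        refine ⟨t, htT, ?_⟩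
        rw [SimpleGraph.deleteEdges_adj]
        refine ⟨hat, fun hmem => ?_⟩
        rw [Set.mem_singleton_iff, Sym2.eq_iff] at hmem
        rcases hmem with ⟨rfl, rfl⟩ | ⟨rfl, rfl⟩
        · exact hwT htT
        · exact haw rfl
  -- conclude degree w = 1
  have hnb : G.neighborFinset w = {x} := by
    ext u
    simp only [SimpleGraph.mem_neighborFinset, Finset.mem_singleton]
    constructor
    · exact hstep u
    · rintro rfl; exact hxw.symm
  rw [← SimpleGraph.card_neighborFinset_eq_degree, hnb, Finset.card_singleton]
end
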